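/- Let q > 1 be real, λ = q − q^{−1}, let α, β ∈ ℂ satisfy α β̄ = ᾱ β, and let E ∈ ℂ. Then for every complex-valued function f and every real x ≠ 0, the eigenvalue equation (a⁺(a f))(x) = E f(x) holds if and only if f satisfies the difference equation E λ² x² f(x) = f(x)·(|α|² λ² x² + |β|² (q + q^{−1})) + f(q² x)·(−q^{−1} |β|² − i α β̄ q^{1/2} x λ) + f(q^{−2} x)·(−q |β|² + i α β̄ q^{1/2} x λ). -/

import Mathlib

/-- The q-derivative `(D_q f)(x) = (f(qx) - f(q⁻¹x)) / (x(q - q⁻¹))`. -/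
noncomputable def Dq (q : ℝ) (f : ℝ → ℂ) (x : ℝ) : ℂ :=
  (f (q * x) - f (q⁻¹ * x)) / ((x : ℂ) * ((q : ℂ) - (q : ℂ)⁻¹))

/-- The annihilation operator `a = α U⁻² + β U⁻¹ P` of the q-oscillator realized
on the quantum line: `(a f)(x) = α q f(q²x) - i β q^{1/2} (D_q f)(qx)`. -/
noncomputable def aOp (q : ℝ) (α β : ℂ) (f : ℝ → ℂ) (x : ℝ) : ℂ :=
  α * (q : ℂ) * f (q ^ 2 * x) -
    Complex.I * β * ((q ^ ((1 : ℝ) / 2) : ℝ) : ℂ) * Dq q f (q * x)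

/-- The creation operator `a⁺ = ᾱ U² + β̄ P U` of the q-oscillator realized
on the quantum line: `(a⁺ f)(x) = ᾱ q⁻¹ f(q⁻²x) - i β̄ q^{-3/2} (D_q f)(q⁻¹x)`. -/
noncomputable def aPlusOp (q : ℝ) (α β : ℂ) (f : ℝ → ℂ) (x : ℝ) : ℂ :=
  (starRingEnd ℂ) α * (q : ℂ)⁻¹ * f (q⁻¹ ^ 2 * x) -
    Complex.I * (starRingEnd ℂ) β * ((q ^ (-(3 : ℝ) / 2) : ℝ) : ℂ) * Dq q f (q⁻¹ * x)

/-! On the lattice `x q^{2ℤ}` the q-derivatives `(D_q f)(q^{±1} x)` are difference quotients of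
`f` between neighbouring lattice points, so `(a⁺(a f))(x)` is a combination of `f(q⁻²x)`, `f(x)`
and `f(q²x)` with denominators dividing `λ² x²`. Clearing them gives the difference equation:
with `s = q^{1/2}` one has `q^{-3/2} = s q⁻²`, the `β β̄` terms collect into `|β|²`, and the
cross terms `i ᾱ β` and `i α β̄` cancel or combine exactly because `α β̄ = ᾱ β`. -/

section
variable {q : ℝ}

lemma sub_inv_ne_zero (hq : 0 < q) (hq1 : q ≠ 1) : q - q⁻¹ ≠ 0 := by
  rw [sub_ne_zero]
  intro h
  have hqq : q * q = 1 := by rw [← mul_inv_cancel₀ hq.ne', ← h]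
  exact (mul_self_eq_one_iff.mp hqq).elim hq1 (fun h' => by linarith)

lemma rpow_neg_three_halves (hq : 0 < q) : q ^ (-(3 : ℝ) / 2) = q ^ ((1 : ℝ) / 2) / q ^ 2 := by
  rw [← Real.rpow_natCast, ← Real.rpow_sub hq]
  norm_num

lemma Dq_apply_mul (f : ℝ → ℂ) (hq : q ≠ 0) (x : ℝ) :
    Dq q f (q * x) = (f (q ^ 2 * x) - f x) / ((q * x : ℝ) * ((q : ℂ) - (q : ℂ)⁻¹)) := by
  rw [Dq, ← mul_assoc, ← sq, inv_mul_cancel_left₀ hq]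

lemma Dq_apply_inv_mul (f : ℝ → ℂ) (hq : q ≠ 0) (x : ℝ) :
    Dq q f (q⁻¹ * x) = (f x - f (q⁻¹ ^ 2 * x)) / ((q⁻¹ * x : ℝ) * ((q : ℂ) - (q : ℂ)⁻¹)) := by
  rw [Dq, mul_inv_cancel_left₀ hq, ← mul_assoc, ← sq]

lemma aPlusOp_aOp_apply_mul_sq (hq : 0 < q) (hq1 : q ≠ 1) {α β : ℂ}
    (hαβ : α * (starRingEnd ℂ) β = (starRingEnd ℂ) α * β) (f : ℝ → ℂ) {x : ℝ} (hx : x ≠ 0) :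
    aPlusOp q α β (aOp q α β f) x * (((q - q⁻¹ : ℝ) : ℂ) ^ 2 * (x : ℂ) ^ 2) =
      f x * ((Complex.normSq α : ℂ) * ((q - q⁻¹ : ℝ) : ℂ) ^ 2 * (x : ℂ) ^ 2 +
          (Complex.normSq β : ℂ) * ((q : ℂ) + (q : ℂ)⁻¹)) +
        f (q ^ 2 * x) * (-(q : ℂ)⁻¹ * (Complex.normSq β : ℂ) -
          Complex.I * α * (starRingEnd ℂ) β * ((q ^ ((1 : ℝ) / 2) : ℝ) : ℂ) *
            (x : ℂ) * ((q - q⁻¹ : ℝ) : ℂ)) +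
        f (q⁻¹ ^ 2 * x) * (-(q : ℂ) * (Complex.normSq β : ℂ) +
          Complex.I * α * (starRingEnd ℂ) β * ((q ^ ((1 : ℝ) / 2) : ℝ) : ℂ) *
            (x : ℂ) * ((q - q⁻¹ : ℝ) : ℂ)) := by
  have hq0 : q ≠ 0 := hq.ne'
  have hL : (q : ℂ) - (q : ℂ)⁻¹ ≠ 0 := by exact_mod_cast sub_inv_ne_zero hq hq1
  have hxc : (x : ℂ) ≠ 0 := by exact_mod_cast hx
  have hback : q ^ 2 * (q⁻¹ ^ 2 * x) = x := by field_simp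
  rw [aPlusOp, Dq_apply_inv_mul _ hq0, aOp, aOp, Dq_apply_mul _ hq0, hback, Dq_apply_mul _ hq0,
    rpow_neg_three_halves hq, Complex.normSq_eq_conj_mul_self, Complex.normSq_eq_conj_mul_self]
  have hs : (((q ^ ((1 : ℝ) / 2) : ℝ) : ℂ)) ^ 2 = q := by
    rw [← Real.sqrt_eq_rpow]
    exact_mod_cast Real.sq_sqrt hq.le
  push_cast at hs ⊢
  generalize ((q ^ ((1 : ℝ) / 2) : ℝ) : ℂ) = s at hs ⊢
  generalize f x = fx, f (q ^ 2 * x) = fUp, f (q⁻¹ ^ 2 * x) = fDown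
  have hs0 : s ≠ 0 := ne_zero_pow two_ne_zero (hs ▸ by exact_mod_cast hq0)
  -- After `q = s²` both sides are rational in `s`.
  rw [← hs] at hL ⊢
  have h4 : s ^ 4 - 1 ≠ 0 := by
    contrapose! hL
    field_simp
    linear_combination hL
  field_simp
  linear_combination (x * Complex.I * (s ^ 7 - s ^ 3) * (fx - fDown)) * hαβ +
    (β * (starRingEnd ℂ) β * (s ^ 2 * (fUp - fx) + s ^ 6 * (fDown - fx))) * Complex.I_sq

end

/-- The eigenvalue equation `(a⁺(a f))(x) = E f(x)` holds at a point `x ≠ 0` if and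
only if `f` satisfies the difference equation
`E λ² x² f(x) = f(x)(|α|² λ² x² + |β|²(q + q⁻¹)) + f(q²x)(-q⁻¹|β|² - iαβ̄ q^{1/2} x λ)
  + f(q⁻²x)(-q|β|² + iαβ̄ q^{1/2} x λ)` at `x`, where `λ = q - q⁻¹`. -/
theorem eigen_iff_difference (q : ℝ) (hq : 1 < q) (α β : ℂ)
    (hαβ : α * (starRingEnd ℂ) β = (starRingEnd ℂ) α * β) (E : ℂ) :
    ∀ (f : ℝ → ℂ) (x : ℝ), x ≠ 0 →
      (aPlusOp q α β (aOp q α β f) x = E * f x ↔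
        E * ((q - q⁻¹ : ℝ) : ℂ) ^ 2 * (x : ℂ) ^ 2 * f x =
          f x * ((Complex.normSq α : ℂ) * ((q - q⁻¹ : ℝ) : ℂ) ^ 2 * (x : ℂ) ^ 2 +
              (Complex.normSq β : ℂ) * ((q : ℂ) + (q : ℂ)⁻¹)) +
          f (q ^ 2 * x) * (-(q : ℂ)⁻¹ * (Complex.normSq β : ℂ) -
              Complex.I * α * (starRingEnd ℂ) β * ((q ^ ((1 : ℝ) / 2) : ℝ) : ℂ) *
                (x : ℂ) * ((q - q⁻¹ : ℝ) : ℂ)) +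
          f (q⁻¹ ^ 2 * x) * (-(q : ℂ) * (Complex.normSq β : ℂ) +
              Complex.I * α * (starRingEnd ℂ) β * ((q ^ ((1 : ℝ) / 2) : ℝ) : ℂ) *
                (x : ℂ) * ((q - q⁻¹ : ℝ) : ℂ))) := by
  intro f x hx
  have hq0 : 0 < q := zero_lt_one.trans hq
  have hscale : ((q - q⁻¹ : ℝ) : ℂ) ^ 2 * (x : ℂ) ^ 2 ≠ 0 := by
    have hL := sub_inv_ne_zero hq0 hq.ne'
    have hxc : (x : ℂ) ≠ 0 := by exact_mod_cast hx
    exact mul_ne_zero (pow_ne_zero 2 (by exact_mod_cast hL)) (pow_ne_zero 2 hxc)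
  rw [← aPlusOp_aOp_apply_mul_sq hq0 hq.ne' hαβ f hx, ← mul_left_inj' hscale]
  constructor <;> intro h <;> linear_combination -h
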